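/- Let n be a positive integer, let a₁,…,aₙ and b₁,…,bₙ be positive real numbers, and let μ > 0 be a real number. Define T = Σ_{k=1}^n aₖ/bₖ and, for m = 1, 2, 3, S^(m) = Σ_{k=1}^n Σ_{l=1}^n aₖaₗ/(bₖ+bₗ)^m. Then T² ≤ μ·S^(1) + 2·S^(2) + (2/μ)·S^(3). -/

import Mathlib

open Real Finset MeasureTheory Set Filter

open scoped Nat Topology

/-!
With `f t = ∑ k, aₖ e^{-bₖ t}` one has `T = ∫₀^∞ f`, and expanding `f²` gives
`∫₀^∞ f(t)² (μ + t)² / μ dt = μ S⁽¹⁾ + 2 S⁽²⁾ + (2/μ) S⁽³⁾`, since `∫₀^∞ tʲ e^{-st} dt = j!/s^{j+1}`.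
The theorem is then the Cauchy–Schwarz inequality `(∫ f)² ≤ (∫ w) (∫ f²/w)` for the weight
`w t = μ / (μ + t)²`, whose integral over `(0, ∞)` is `1`.
-/

lemma sq_integral_le_integral_mul_integral_sq_div {α : Type*} [MeasurableSpace α]
    {ν : Measure α} {f w : α → ℝ} (hw : ∀ᵐ x ∂ν, 0 < w x) (hf : Integrable f ν)
    (hw_int : Integrable w ν) (hfw : Integrable (fun x ↦ f x ^ 2 / w x) ν) :
    (∫ x, f x ∂ν) ^ 2 ≤ (∫ x, w x ∂ν) * ∫ x, f x ^ 2 / w x ∂ν := by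
  -- `s ↦ ∫ (s w - f)² / w` is a nonnegative quadratic, so its discriminant is nonpositive.
  have hquad : ∀ s : ℝ, 0 ≤ (∫ x, w x ∂ν) * (s * s) + (-2 * ∫ x, f x ∂ν) * s +
      ∫ x, f x ^ 2 / w x ∂ν := by
    intro s
    have hexpand : ∀ᵐ x ∂ν, (s * w x - f x) ^ 2 / w x =
        s ^ 2 * w x - 2 * s * f x + f x ^ 2 / w x := hw.mono fun x hx ↦ by
      field_simp; ring
    calc 0 ≤ ∫ x, (s * w x - f x) ^ 2 / w x ∂ν :=
          integral_nonneg_of_ae (hw.mono fun x hx ↦ by positivity)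
      _ = ∫ x, (s ^ 2 * w x - 2 * s * f x + f x ^ 2 / w x) ∂ν := integral_congr_ae hexpand
      _ = _ := by
          have hw' : Integrable (fun x ↦ s ^ 2 * w x) ν := hw_int.const_mul _
          have hf' : Integrable (fun x ↦ 2 * s * f x) ν := hf.const_mul _
          have hwf : Integrable (fun x ↦ s ^ 2 * w x - 2 * s * f x) ν := hw'.sub hf'
          rw [integral_add hwf hfw, integral_sub hw' hf', integral_const_mul,
            integral_const_mul]
          ring
  have := discrim_le_zero hquad
  rw [discrim] at this
  nlinarith

lemma integral_pow_mul_exp_neg_mul_Ioi (j : ℕ) {r : ℝ} (hr : 0 < r) :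
    ∫ t in Ioi (0 : ℝ), t ^ j * exp (-(r * t)) = j ! / r ^ (j + 1) := by
  have h := integral_rpow_mul_exp_neg_mul_Ioi (a := j + 1) (by positivity) hr
  rw [add_sub_cancel_right, Gamma_nat_eq_factorial, div_rpow one_pos.le hr.le, one_rpow,
    ← Nat.cast_succ, rpow_natCast, one_div_mul_eq_div] at h
  rw [← h]
  exact setIntegral_congr_fun measurableSet_Ioi fun t _ ↦ by rw [rpow_natCast]

lemma integrableOn_pow_mul_exp_neg_mul_Ioi (j : ℕ) {r : ℝ} (hr : 0 < r) :
    IntegrableOn (fun t : ℝ ↦ t ^ j * exp (-(r * t))) (Ioi 0) := by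
  refine (integrableOn_rpow_mul_exp_neg_mul_rpow (s := j) (p := 1)
    (by linarith [j.cast_nonneg (α := ℝ)]) one_pos hr).congr_fun (fun t _ ↦ ?_) measurableSet_Ioi
  simp only [rpow_natCast, rpow_one, neg_mul]

lemma add_sq_mul_exp_neg_mul_eq (c s t : ℝ) :
    (c + t) ^ 2 * exp (-(s * t)) = c ^ 2 * (t ^ 0 * exp (-(s * t))) +
      2 * c * (t ^ 1 * exp (-(s * t))) + t ^ 2 * exp (-(s * t)) := by
  ring

lemma integrableOn_add_sq_mul_exp_neg_mul_Ioi (c : ℝ) {s : ℝ} (hs : 0 < s) :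
    IntegrableOn (fun t : ℝ ↦ (c + t) ^ 2 * exp (-(s * t))) (Ioi 0) := by
  simp only [add_sq_mul_exp_neg_mul_eq]
  exact (((integrableOn_pow_mul_exp_neg_mul_Ioi 0 hs).const_mul _).add
    ((integrableOn_pow_mul_exp_neg_mul_Ioi 1 hs).const_mul _)).add
    (integrableOn_pow_mul_exp_neg_mul_Ioi 2 hs)

lemma integral_add_sq_mul_exp_neg_mul_Ioi (c : ℝ) {s : ℝ} (hs : 0 < s) :
    ∫ t in Ioi (0 : ℝ), (c + t) ^ 2 * exp (-(s * t)) = c ^ 2 / s + 2 * c / s ^ 2 + 2 / s ^ 3 := by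
  have h0 := (integrableOn_pow_mul_exp_neg_mul_Ioi 0 hs).const_mul (c ^ 2)
  have h1 := (integrableOn_pow_mul_exp_neg_mul_Ioi 1 hs).const_mul (2 * c)
  have h01 : IntegrableOn (fun t : ℝ ↦ c ^ 2 * (t ^ 0 * exp (-(s * t))) +
      2 * c * (t ^ 1 * exp (-(s * t)))) (Ioi 0) := h0.add h1
  simp only [add_sq_mul_exp_neg_mul_eq]
  rw [integral_add h01 (integrableOn_pow_mul_exp_neg_mul_Ioi 2 hs), integral_add h0 h1,
    integral_const_mul, integral_const_mul, integral_pow_mul_exp_neg_mul_Ioi 0 hs,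
    integral_pow_mul_exp_neg_mul_Ioi 1 hs, integral_pow_mul_exp_neg_mul_Ioi 2 hs]
  norm_num [Nat.factorial]
  ring

lemma hasDerivAt_neg_div_add {μ x : ℝ} (hx : μ + x ≠ 0) :
    HasDerivAt (fun t : ℝ ↦ -(μ / (μ + t))) (μ / (μ + x) ^ 2) x := by
  have h : HasDerivAt (fun t : ℝ ↦ -(μ / (μ + t))) (-((0 * (μ + x) - μ * 1) / (μ + x) ^ 2)) x :=
    ((hasDerivAt_const x μ).div ((hasDerivAt_id' x).const_add μ) hx).neg
  convert h using 1
  ring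

lemma tendsto_neg_div_add_atTop (μ : ℝ) :
    Tendsto (fun t : ℝ ↦ -(μ / (μ + t))) atTop (𝓝 0) := by
  simpa using (tendsto_const_nhds.div_atTop (tendsto_atTop_add_const_left _ μ tendsto_id)).neg

lemma integrableOn_div_add_sq_Ioi {μ : ℝ} (hμ : 0 < μ) :
    IntegrableOn (fun t : ℝ ↦ μ / (μ + t) ^ 2) (Ioi 0) :=
  integrableOn_Ioi_deriv_of_nonneg' (fun x hx ↦ hasDerivAt_neg_div_add (by
    have : 0 ≤ x := hx; positivity)) (fun x _ ↦ by positivity) (tendsto_neg_div_add_atTop μ)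

lemma integral_div_add_sq_Ioi {μ : ℝ} (hμ : 0 < μ) :
    ∫ t in Ioi (0 : ℝ), μ / (μ + t) ^ 2 = 1 := by
  rw [integral_Ioi_of_hasDerivAt_of_tendsto' (fun x hx ↦ hasDerivAt_neg_div_add (by
    have : 0 ≤ x := hx; positivity)) (integrableOn_div_add_sq_Ioi hμ)
    (tendsto_neg_div_add_atTop μ)]
  simp [hμ.ne']

section ExpSum

variable {ι : Type*} [Fintype ι] (a b : ι → ℝ)

lemma integrableOn_sum_mul_exp_neg_mul_Ioi (hb : ∀ i, 0 < b i) :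
    IntegrableOn (fun t : ℝ ↦ ∑ i, a i * exp (-(b i * t))) (Ioi 0) :=
  integrable_finsetSum _ fun i _ ↦ by
    simpa using (integrableOn_pow_mul_exp_neg_mul_Ioi 0 (hb i)).const_mul (a i)

lemma integral_sum_mul_exp_neg_mul_Ioi (hb : ∀ i, 0 < b i) :
    ∫ t in Ioi (0 : ℝ), ∑ i, a i * exp (-(b i * t)) = ∑ i, a i / b i := by
  rw [integral_finsetSum _ fun i _ ↦ by
    simpa using (integrableOn_pow_mul_exp_neg_mul_Ioi 0 (hb i)).const_mul (a i)]
  refine sum_congr rfl fun i _ ↦ ?_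
  have h := integral_pow_mul_exp_neg_mul_Ioi 0 (hb i)
  simp only [pow_zero, one_mul, Nat.factorial_zero, Nat.cast_one, zero_add, pow_one] at h
  rw [integral_const_mul, h, mul_one_div]

lemma sq_sum_mul_exp_neg_mul_mul_add_sq (c t : ℝ) :
    (∑ i, a i * exp (-(b i * t))) ^ 2 * (c + t) ^ 2 =
      ∑ i, ∑ j, a i * a j * ((c + t) ^ 2 * exp (-((b i + b j) * t))) := by
  rw [sq, sum_mul_sum, sum_mul]
  refine sum_congr rfl fun i _ ↦ ?_
  rw [sum_mul]
  refine sum_congr rfl fun j _ ↦ ?_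
  rw [add_mul, neg_add, exp_add]
  ring

lemma integrableOn_sq_sum_mul_exp_neg_mul_mul_add_sq_Ioi (hb : ∀ i, 0 < b i) (c : ℝ) :
    IntegrableOn (fun t : ℝ ↦ (∑ i, a i * exp (-(b i * t))) ^ 2 * (c + t) ^ 2) (Ioi 0) := by
  simp only [sq_sum_mul_exp_neg_mul_mul_add_sq]
  exact integrable_finsetSum _ fun i _ ↦ integrable_finsetSum _ fun j _ ↦
    (integrableOn_add_sq_mul_exp_neg_mul_Ioi c (add_pos (hb i) (hb j))).const_mul _

lemma integral_sq_sum_mul_exp_neg_mul_mul_add_sq_Ioi (hb : ∀ i, 0 < b i) (c : ℝ) :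
    ∫ t in Ioi (0 : ℝ), (∑ i, a i * exp (-(b i * t))) ^ 2 * (c + t) ^ 2 =
      ∑ i, ∑ j, a i * a j *
        (c ^ 2 / (b i + b j) + 2 * c / (b i + b j) ^ 2 + 2 / (b i + b j) ^ 3) := by
  have hint : ∀ i j, IntegrableOn (fun t ↦ a i * a j * ((c + t) ^ 2 * exp (-((b i + b j) * t))))
      (Ioi 0) := fun i j ↦
    (integrableOn_add_sq_mul_exp_neg_mul_Ioi c (add_pos (hb i) (hb j))).const_mul _
  simp only [sq_sum_mul_exp_neg_mul_mul_add_sq]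
  rw [integral_finsetSum _ fun i _ ↦ integrable_finsetSum _ fun j _ ↦ hint i j]
  refine sum_congr rfl fun i _ ↦ ?_
  rw [integral_finsetSum _ fun j _ ↦ hint i j]
  refine sum_congr rfl fun j _ ↦ ?_
  rw [integral_const_mul, integral_add_sq_mul_exp_neg_mul_Ioi c (add_pos (hb i) (hb j))]

end ExpSum

theorem sum_sq_le_mu_S1_add_two_S2_add_two_div_mu_S3_general
    (n : ℕ) (a b : Fin n → ℝ)
    (hb : ∀ i, 0 < b i)
    (μ : ℝ) (hμ : 0 < μ) :
    (∑ k, a k / b k) ^ 2 ≤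
      μ * (∑ k, ∑ l, a k * a l / (b k + b l) ^ 1) +
      2 * (∑ k, ∑ l, a k * a l / (b k + b l) ^ 2) +
      (2 / μ) * (∑ k, ∑ l, a k * a l / (b k + b l) ^ 3) := by
  have hfw : ∀ t, (∑ k, a k * exp (-(b k * t))) ^ 2 / (μ / (μ + t) ^ 2) =
      (∑ k, a k * exp (-(b k * t))) ^ 2 * (μ + t) ^ 2 / μ := fun t ↦ div_div_eq_mul_div _ _ _
  have hcs := sq_integral_le_integral_mul_integral_sq_div (ν := volume.restrict (Ioi 0))
    ((ae_restrict_iff' measurableSet_Ioi).mpr (.of_forall fun t (ht : 0 < t) ↦ by positivity))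
    (integrableOn_sum_mul_exp_neg_mul_Ioi a b hb) (integrableOn_div_add_sq_Ioi hμ)
    (by simpa only [hfw] using
      (integrableOn_sq_sum_mul_exp_neg_mul_mul_add_sq_Ioi a b hb μ).div_const μ)
  rw [integral_sum_mul_exp_neg_mul_Ioi a b hb, integral_div_add_sq_Ioi hμ, one_mul] at hcs
  simp only [hfw, integral_div, integral_sq_sum_mul_exp_neg_mul_mul_add_sq_Ioi a b hb] at hcs
  convert hcs using 1
  simp only [mul_sum, sum_div, ← sum_add_distrib]
  refine sum_congr rfl fun k _ ↦ sum_congr rfl fun l _ ↦ ?_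
  field_simp

theorem sum_sq_le_mu_S1_add_two_S2_add_two_div_mu_S3
    (n : ℕ) (hn : 0 < n) (a b : Fin n → ℝ)
    (ha : ∀ i, 0 < a i) (hb : ∀ i, 0 < b i)
    (μ : ℝ) (hμ : 0 < μ) :
    (∑ k, a k / b k) ^ 2 ≤
      μ * (∑ k, ∑ l, a k * a l / (b k + b l) ^ 1) +
      2 * (∑ k, ∑ l, a k * a l / (b k + b l) ^ 2) +
      (2 / μ) * (∑ k, ∑ l, a k * a l / (b k + b l) ^ 3) :=
  sum_sq_le_mu_S1_add_two_S2_add_two_div_mu_S3_general n a b hb μ hμ
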